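/- arXiv:2003.08810 — 6 statements merged into one kernel-verified Lean document; each statement's English description precedes it below -/
import Mathlib

section
/- For all α > 0, β > 0, 0 < a < 1 and u ∈ ℝ, the identity ((β - i a u)/(β - i u))^α = ∑_{k=0}^∞ C(α+k-1, k) a^α (1-a)^k (β/(β - i a u))^k holds; that is, the characteristic function of the a-remainder of the Gamma(α, β) law is an infinite Polya(α, 1-a)-weighted mixture of the characteristic functions of Erlang laws Erl_k(β/a). -/
/-! With `d = β - iau`, `e = β - iu` and `x = (1 - a) β / d` one has `1 - x = a e / d` and
`‖x‖ < 1`, because `Re d = β`. The claim is therefore the negative binomial series of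
`a^α (1 - x)^(-α) = (d / e)^α`, whose coefficients `C(α+k-1, k)` are `Ring.choose (α + k - 1) k`. -/

open Complex

/-- Generalized binomial coefficient `C(α+k-1, k) = α(α+1)⋯(α+k-1)/k!`. -/
noncomputable def negBinomCoeff (α : ℝ) (k : ℕ) : ℝ :=
  (∏ j ∈ Finset.range k, (α + j)) / (Nat.factorial k : ℝ)

lemma prod_range_add_eq_ascPochhammer_eval {R : Type*} [CommSemiring R] (r : R) (k : ℕ) :
    ∏ j ∈ Finset.range k, (r + j) = (ascPochhammer R k).eval r := by
  induction k with
  | zero => simp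
  | succ k ih => rw [Finset.prod_range_succ, ih, ascPochhammer_succ_eval]

lemma negBinomCoeff_eq_choose (α : ℝ) (k : ℕ) : negBinomCoeff α k = Ring.choose (α + k - 1) k := by
  rw [← Ring.multichoose_eq, negBinomCoeff, div_eq_iff (by positivity), mul_comm,
    ← nsmul_eq_mul, Ring.factorial_nsmul_multichoose_eq_ascPochhammer,
    Polynomial.ascPochhammer_smeval_eq_eval, prod_range_add_eq_ascPochhammer_eval]

lemma hasSum_choose_mul_pow (s : ℂ) {x : ℂ} (hx : ‖x‖ < 1) :
    HasSum (fun n : ℕ => Ring.choose (s + n - 1) n * x ^ n) ((1 - x) ^ s)⁻¹ := by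
  have hx' : x ∈ Metric.eball (0 : ℂ) 1 := by
    rw [← ENNReal.ofReal_one, Metric.eball_ofReal]; simpa using hx
  simpa [FormalMultilinearSeries.ofScalars_apply_eq, mul_comm] using
    (one_div_one_sub_cpow_hasFPowerSeriesOnBall_zero s).hasSum hx'

lemma ofReal_mul_cpow {r : ℝ} (hr : 0 < r) {z : ℂ} (hz : z ≠ 0) (s : ℂ) :
    ((r : ℂ) * z) ^ s = (r : ℂ) ^ s * z ^ s := by
  have hr' : (r : ℂ) ≠ 0 := ofReal_ne_zero.2 hr.ne'
  rw [cpow_def_of_ne_zero (mul_ne_zero hr' hz), cpow_def_of_ne_zero hr', cpow_def_of_ne_zero hz,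
    log_ofReal_mul hr hz, ofReal_log hr.le, ← exp_add, add_mul]

lemma hasSum_cpow_mul_choose_mul_pow {c : ℝ} (hc : 0 < c) (s : ℂ) {x : ℂ} (hx : ‖x‖ < 1) :
    HasSum (fun n : ℕ => (c : ℂ) ^ s * Ring.choose (s + n - 1) n * x ^ n)
      (((c : ℂ) * (1 - x)⁻¹) ^ s) := by
  have hslit : 1 - x ∈ slitPlane := by
    simpa [← sub_eq_add_neg] using mem_slitPlane_of_norm_lt_one (z := -x) (by simpa)
  rw [ofReal_mul_cpow hc (inv_ne_zero (slitPlane_ne_zero hslit)),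
    inv_cpow _ _ (slitPlane_arg_ne_pi hslit)]
  simpa only [mul_assoc] using (hasSum_choose_mul_pow s hx).mul_left ((c : ℂ) ^ s)

lemma norm_ofReal_div_le_one {β : ℝ} (hβ : 0 ≤ β) {d : ℂ} (hd : d.re = β) :
    ‖(β : ℂ) / d‖ ≤ 1 := by
  rw [norm_div, norm_real, Real.norm_of_nonneg hβ]
  exact div_le_one_of_le₀ (hd ▸ re_le_norm d) (norm_nonneg d)

theorem arem_gamma_polya_mixture_general
    (α β a : ℝ) (hβ : 0 < β) (ha0 : 0 < a) (ha1 : a < 1) (u : ℝ) :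
    HasSum
      (fun k : ℕ =>
        ((negBinomCoeff α k * a ^ α * (1 - a) ^ k : ℝ) : ℂ) *
          ((β : ℂ) / ((β : ℂ) - Complex.I * a * u)) ^ k)
      ((((β : ℂ) - Complex.I * a * u) / ((β : ℂ) - Complex.I * u)) ^ (α : ℂ)) := by
  set d : ℂ := β - I * a * u
  set e : ℂ := β - I * u
  have hd : d.re = β := by simp [d]
  have hd0 : d ≠ 0 := ne_zero_of_re_pos (hd ▸ hβ)
  have he0 : e ≠ 0 := ne_zero_of_re_pos (by simpa [e] using hβ)
  set x : ℂ := ((1 - a : ℝ) : ℂ) * (β / d)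
  have hx : ‖x‖ < 1 := by
    rw [norm_mul, norm_real, Real.norm_of_nonneg (by linarith)]
    nlinarith [norm_ofReal_div_le_one hβ.le hd]
  have hval : (a : ℂ) * (1 - x)⁻¹ = d / e := by
    have ha : (a : ℂ) ≠ 0 := ofReal_ne_zero.2 ha0.ne'
    have h1x : 1 - x = a * e / d := by
      rw [eq_div_iff hd0]
      simp only [x]
      field_simp
      simp only [d, e]
      push_cast
      ring
    rw [h1x]
    field_simp
  rw [← hval]
  convert hasSum_cpow_mul_choose_mul_pow ha0 α hx using 2 with k
  simp only [x, negBinomCoeff_eq_choose, mul_pow]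
  push_cast [ofReal_cpow ha0.le, ofReal_choose]
  ring

/-- The characteristic function of the a-remainder of Gamma(α, β) is an infinite
Polya(α, 1-a)-weighted mixture of the characteristic functions of Erlang laws
`Erl_k(β/a)`:
`((β - iau)/(β - iu))^α = ∑_k C(α+k-1,k) a^α (1-a)^k (β/(β - iau))^k`. -/
theorem arem_gamma_polya_mixture
    (α β a : ℝ) (hα : 0 < α) (hβ : 0 < β) (ha0 : 0 < a) (ha1 : a < 1) (u : ℝ) :
    HasSum
      (fun k : ℕ =>
        ((negBinomCoeff α k * a ^ α * (1 - a) ^ k : ℝ) : ℂ) *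
          ((β : ℂ) / ((β : ℂ) - Complex.I * a * u)) ^ k)
      ((((β : ℂ) - Complex.I * a * u) / ((β : ℂ) - Complex.I * u)) ^ (α : ℂ)) :=
  arem_gamma_polya_mixture_general α β a hβ ha0 ha1 u
end

section
/- For a positive integer n, β > 0, 0 < a < 1 and u ∈ ℝ, the identity ((β - i a u)/(β - i u))^n = ∑_{k=0}^n C(n, k) a^{n-k} (1-a)^k (β/(β - i u))^k holds; that is, the a-remainder of the Erlang law Erl_n(β) is a finite mixture of Erlang laws Erl_k(β) with binomial Bin(n, 1-a) weights. -/
open Complex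

/-- The a-remainder of the Erlang law `Erl_n(β)` is a finite mixture of Erlang laws
`Erl_k(β)` with binomial `Bin(n, 1-a)` weights:
`((β - iau)/(β - iu))^n = ∑_{k=0}^n C(n,k) a^{n-k} (1-a)^k (β/(β - iu))^k`. -/
theorem arem_erlang_binomial_mixture
    (n : ℕ) (hn : 0 < n) (β a : ℝ) (hβ : 0 < β) (ha0 : 0 < a) (ha1 : a < 1) (u : ℝ) :
    (((β : ℂ) - Complex.I * a * u) / ((β : ℂ) - Complex.I * u)) ^ n
      = ∑ k ∈ Finset.range (n + 1),
          ((Nat.choose n k : ℝ) * a ^ (n - k) * (1 - a) ^ k : ℝ) *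
            ((β : ℂ) / ((β : ℂ) - Complex.I * u)) ^ k := by
  have hD : ((β : ℂ) - Complex.I * u) ≠ 0 := by
    intro h
    have hre : ((β : ℂ) - Complex.I * u).re = β := by simp
    rw [h] at hre
    simp at hre
    exact hβ.ne' hre.symm
  have key : (((β : ℂ) - Complex.I * a * u) / ((β : ℂ) - Complex.I * u))
      = ((1 - a : ℝ)) * ((β : ℂ) / ((β : ℂ) - Complex.I * u)) + (a : ℝ) := by
    field_simp
    push_cast
    ring
  rw [key, add_pow]
  apply Finset.sum_congr rfl
  intro k hk
  push_cast [mul_pow, div_pow]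
  ring
end

section
/- For k, λ, β > 0 and t > 0, the identity ((β - iue^{-kt})/(β - iu))^{λ/k} = exp(λ t (φ̃(u) - 1)) holds, where φ̃(u) = ∫_0^1 β e^{ktv}/(β e^{ktv} - iu) dv; i.e. the law of the Gamma-OU process at time t (started at 0) is compound Poisson with jump characteristic function φ̃. -/
open Complex

/-!
Put `K = k t` and `g v = β e^{K v} - i u`. Every `g v` has positive real part, so principal
logarithms of products and quotients of these numbers add up, and `log ∘ g` is a primitive of
`K β e^{K v} / g v`; hence `φ̃(u) = (log g 1 - log g 0) / K`. On the other side the base of the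
power factors as `e^{-K} g 1 / g 0`, whose logarithm is `-K + log g 1 - log g 0`, and multiplying
by `λ / k` gives exactly `λ t (φ̃(u) - 1)`.
-/

namespace Complex

theorem log_div_of_re_pos {a b : ℂ} (ha : 0 < a.re) (hb : 0 < b.re) :
    log (a / b) = log a - log b := by
  have ha₀ : a ≠ 0 := fun h => by simp [h] at ha
  have hb₀ : b ≠ 0 := fun h => by simp [h] at hb
  have hargA := abs_lt.1 (abs_arg_lt_pi_div_two_iff.2 (Or.inl ha))
  have hargB := abs_lt.1 (abs_arg_inv b ▸ abs_arg_lt_pi_div_two_iff.2 (Or.inl hb))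
  rw [div_eq_mul_inv, log_mul ha₀ (inv_ne_zero hb₀),
    log_inv b (slitPlane_arg_ne_pi (mem_slitPlane_iff.2 (Or.inl hb))), sub_eq_add_neg]
  constructor <;> linarith [Real.pi_pos]

end Complex

section

variable {β K : ℝ} {w : ℂ}

lemma re_ofReal_mul_exp_sub_pos (hβ : 0 < β) (hw : w.re ≤ 0) (v : ℝ) :
    0 < (((β * Real.exp (K * v) : ℝ) : ℂ) - w).re := by
  rw [sub_re, ofReal_re]
  have := Real.exp_pos (K * v)
  nlinarith

lemma hasDerivAt_log_ofReal_mul_exp_sub (hβ : 0 < β) (hw : w.re ≤ 0) (v : ℝ) :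
    HasDerivAt (fun v : ℝ => log (((β * Real.exp (K * v) : ℝ) : ℂ) - w))
      (K * ((β * Real.exp (K * v) : ℝ) : ℂ) / (((β * Real.exp (K * v) : ℝ) : ℂ) - w)) v := by
  have hexp : HasDerivAt (fun v : ℝ => β * Real.exp (K * v)) (K * (β * Real.exp (K * v))) v :=
    (((hasDerivAt_id v).const_mul K).exp.const_mul β).congr_deriv (by simp; ring)
  simpa using (hexp.ofReal_comp.sub_const w).clog_real
    (mem_slitPlane_iff.2 (Or.inl (re_ofReal_mul_exp_sub_pos hβ hw v)))

theorem integral_ofReal_mul_exp_div_sub (hβ : 0 < β) (hK : K ≠ 0) (hw : w.re ≤ 0) :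
    ∫ v in (0:ℝ)..1, ((β * Real.exp (K * v) : ℝ) : ℂ) / (((β * Real.exp (K * v) : ℝ) : ℂ) - w)
      = (log (((β * Real.exp K : ℝ) : ℂ) - w) - log (β - w)) / K := by
  have hK' : (K : ℂ) ≠ 0 := ofReal_ne_zero.2 hK
  have hderiv (v : ℝ) : HasDerivAt (fun v : ℝ => log (((β * Real.exp (K * v) : ℝ) : ℂ) - w) / K)
      (((β * Real.exp (K * v) : ℝ) : ℂ) / (((β * Real.exp (K * v) : ℝ) : ℂ) - w)) v :=
    ((hasDerivAt_log_ofReal_mul_exp_sub hβ hw v).div_const _).congr_deriv (by field_simp)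
  have hcont : Continuous fun v : ℝ =>
      ((β * Real.exp (K * v) : ℝ) : ℂ) / (((β * Real.exp (K * v) : ℝ) : ℂ) - w) := by
    fun_prop (disch := exact fun v => ne_of_apply_ne re (re_ofReal_mul_exp_sub_pos hβ hw v).ne')
  rw [intervalIntegral.integral_eq_sub_of_hasDerivAt (fun v _ => hderiv v)
    (hcont.intervalIntegrable 0 1)]
  simp [sub_div]

lemma ofReal_sub_mul_exp_neg (β K : ℝ) (w : ℂ) :
    (β : ℂ) - w * (Real.exp (-K) : ℝ) = (Real.exp (-K) : ℝ) * ((β * Real.exp K : ℝ) - w) := by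
  rw [Real.exp_neg]
  push_cast
  field_simp

theorem ratio_cpow_eq_exp (hβ : 0 < β) (hw : w.re ≤ 0) (s : ℂ) :
    (((β : ℂ) - w * (Real.exp (-K) : ℝ)) / ((β : ℂ) - w)) ^ s
      = exp (s * (log (((β * Real.exp K : ℝ) : ℂ) - w) - log (β - w) - K)) := by
  have h₁ : 0 < (((β * Real.exp K : ℝ) : ℂ) - w).re := by
    simpa using re_ofReal_mul_exp_sub_pos (K := K) hβ hw 1
  have h₀ : 0 < ((β : ℂ) - w).re := by
    simpa using re_ofReal_mul_exp_sub_pos (K := K) hβ hw 0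
  have hquot : (((β * Real.exp K : ℝ) : ℂ) - w) / (β - w) ≠ 0 :=
    div_ne_zero (ne_of_apply_ne re h₁.ne') (ne_of_apply_ne re h₀.ne')
  have hne : ((β : ℂ) - w * (Real.exp (-K) : ℝ)) / ((β : ℂ) - w) ≠ 0 := by
    rw [ofReal_sub_mul_exp_neg, mul_div_assoc]
    exact mul_ne_zero (ofReal_ne_zero.2 (Real.exp_pos _).ne') hquot
  rw [cpow_def_of_ne_zero hne, ofReal_sub_mul_exp_neg, mul_div_assoc,
    log_ofReal_mul (Real.exp_pos _) hquot, log_div_of_re_pos h₁ h₀, Real.log_exp]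
  congr 1
  push_cast
  ring

end

theorem gammaOU_compound_poisson_representation_general
    (k lam β : ℝ) (hk : 0 < k) (hβ : 0 < β)
    (t : ℝ) (ht : 0 < t) (u : ℝ) :
    (((β : ℂ) - Complex.I * u * Real.exp (-k * t)) / ((β : ℂ) - Complex.I * u))
        ^ ((lam / k : ℝ) : ℂ)
      = Complex.exp ((lam * t : ℝ) *
          ((∫ v in (0:ℝ)..1,
              ((β * Real.exp (k * t * v) : ℝ) : ℂ)
                / (((β * Real.exp (k * t * v) : ℝ) : ℂ) - Complex.I * u)) - 1)) := by
  have hw : (I * u).re ≤ 0 := by simp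
  rw [neg_mul, ratio_cpow_eq_exp hβ hw, integral_ofReal_mul_exp_div_sub hβ (by positivity) hw]
  have hk' : (k : ℂ) ≠ 0 := ofReal_ne_zero.2 hk.ne'
  have ht' : (t : ℂ) ≠ 0 := ofReal_ne_zero.2 ht.ne'
  congr 1
  push_cast
  field_simp

/-- The law of the Gamma-OU process at time `t` (started at 0) is compound Poisson:
`((β - iue^{-kt})/(β - iu))^{λ/k} = exp(λ t (φ̃(u) - 1))` where
`φ̃(u) = ∫_0^1 β e^{ktv}/(β e^{ktv} - iu) dv` is the characteristic function of a
uniform mixture of exponential laws. -/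
theorem gammaOU_compound_poisson_representation
    (k lam β : ℝ) (hk : 0 < k) (hlam : 0 < lam) (hβ : 0 < β)
    (t : ℝ) (ht : 0 < t) (u : ℝ) :
    (((β : ℂ) - Complex.I * u * Real.exp (-k * t)) / ((β : ℂ) - Complex.I * u))
        ^ ((lam / k : ℝ) : ℂ)
      = Complex.exp ((lam * t : ℝ) *
          ((∫ v in (0:ℝ)..1,
              ((β * Real.exp (k * t * v) : ℝ) : ℂ)
                / (((β * Real.exp (k * t * v) : ℝ) : ℂ) - Complex.I * u)) - 1)) :=
  gammaOU_compound_poisson_representation_general k lam β hk hβ t ht u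
end

section
/- For α > 0, β > 0 and 0 < a < 1, the a-remainder of the symmetric bilateral gamma law (difference of two i.i.d. Gamma(α, β) variables) has characteristic function ∑_{k=0}^∞ C(α+k-1, k) a^{2α} (1-a²)^k (β²/(β² + a²u²))^k, i.e. it is a Polya(α, 1-a²)-weighted mixture of symmetric bilateral Erlang laws with rate β/a. -/
theorem ascPochhammer_eval_eq_prod_range {R : Type*} [CommSemiring R] (n : ℕ) (r : R) :
    (ascPochhammer R n).eval r = ∏ j ∈ Finset.range n, (r + j) := by
  induction n with
  | zero => simp
  | succ n ih => simp [ascPochhammer_succ_right, ih, Finset.prod_range_succ]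

theorem negBinomCoeff_eq_multichoose (α : ℝ) (k : ℕ) :
    negBinomCoeff α k = Ring.multichoose α k := by
  rw [negBinomCoeff, ← ascPochhammer_eval_eq_prod_range,
    ← Polynomial.ascPochhammer_smeval_eq_eval,
    ← Ring.factorial_nsmul_multichoose_eq_ascPochhammer, nsmul_eq_mul]
  field_simp

theorem hasSum_negBinomCoeff_mul_pow (α : ℝ) {x : ℝ} (hx : |x| < 1) :
    HasSum (fun k => negBinomCoeff α k * x ^ k) ((1 - x) ^ (-α)) := by
  have hx_mem : x ∈ Metric.eball (0 : ℝ) 1 := by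
    simpa [Metric.mem_eball, edist_dist, Real.dist_eq] using hx
  have h := (Real.one_div_one_sub_rpow_hasFPowerSeriesOnBall_zero α).hasSum hx_mem
  simp only [FormalMultilinearSeries.ofScalars_apply_eq', smul_eq_mul, zero_add] at h
  rw [Real.rpow_neg (by linarith [(abs_lt.mp hx).2]), ← one_div]
  simpa only [negBinomCoeff_eq_multichoose, Ring.multichoose_eq] using h

theorem arem_symmetric_bilateral_gamma_polya_mixture_general
    (α β a : ℝ) (hβ : 0 < β) (ha0 : 0 < a) (ha1 : a < 1) (u : ℝ) :
    HasSum
      (fun k : ℕ =>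
        negBinomCoeff α k * a ^ (2 * α) * (1 - a ^ 2) ^ k *
          (β ^ 2 / (β ^ 2 + a ^ 2 * u ^ 2)) ^ k)
      (((β ^ 2 + a ^ 2 * u ^ 2) / (β ^ 2 + u ^ 2)) ^ α) := by
  set t := β ^ 2 / (β ^ 2 + a ^ 2 * u ^ 2) with ht
  have ht_nonneg : 0 ≤ t := by positivity
  have ht_le_one : t ≤ 1 := div_le_one_of_le₀ (by nlinarith [sq_nonneg (a * u)]) (by positivity)
  have ha_sq : 0 < a ^ 2 := by positivity
  have ha_sq_lt : a ^ 2 < 1 := by nlinarith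
  have hx : |(1 - a ^ 2) * t| < 1 := by
    rw [abs_lt]
    constructor <;> nlinarith
  have h_one_sub :
      1 - (1 - a ^ 2) * t = a ^ 2 * ((β ^ 2 + a ^ 2 * u ^ 2) / (β ^ 2 + u ^ 2))⁻¹ := by
    rw [ht]
    field_simp
    ring
  have h_value : a ^ (2 * α) * (1 - (1 - a ^ 2) * t) ^ (-α) =
      ((β ^ 2 + a ^ 2 * u ^ 2) / (β ^ 2 + u ^ 2)) ^ α := by
    have ha_sq_rpow : 0 < (a ^ 2) ^ α := by positivity
    rw [h_one_sub, Real.rpow_neg (by positivity), Real.mul_rpow (by positivity) (by positivity),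
      Real.inv_rpow (by positivity), mul_inv, inv_inv, ← Real.rpow_natCast_mul ha0.le]
    push_cast
    field_simp
  have h_term : ∀ k : ℕ, negBinomCoeff α k * a ^ (2 * α) * (1 - a ^ 2) ^ k * t ^ k =
      a ^ (2 * α) * (negBinomCoeff α k * ((1 - a ^ 2) * t) ^ k) := fun k => by
    rw [mul_pow]
    ring
  simp_rw [h_term, ← h_value]
  exact (hasSum_negBinomCoeff_mul_pow α hx).mul_left _

/-- The a-remainder of the symmetric bilateral gamma law, with characteristic function
`((β² + a²u²)/(β² + u²))^α`, is a Polya(α, 1-a²)-weighted mixture of symmetric bilateral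
Erlang laws with rate `β/a`:
`((β² + a²u²)/(β² + u²))^α = ∑_k C(α+k-1,k) a^{2α} (1-a²)^k (β²/(β² + a²u²))^k`. -/
theorem arem_symmetric_bilateral_gamma_polya_mixture
    (α β a : ℝ) (hα : 0 < α) (hβ : 0 < β) (ha0 : 0 < a) (ha1 : a < 1) (u : ℝ) :
    HasSum
      (fun k : ℕ =>
        negBinomCoeff α k * a ^ (2 * α) * (1 - a ^ 2) ^ k *
          (β ^ 2 / (β ^ 2 + a ^ 2 * u ^ 2)) ^ k)
      (((β ^ 2 + a ^ 2 * u ^ 2) / (β ^ 2 + u ^ 2)) ^ α) :=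
  arem_symmetric_bilateral_gamma_polya_mixture_general α β a hβ ha0 ha1 u
end

section
/- For k, λ, β > 0 and t > 0, the identity ((β² + u²e^{-2kt})/(β² + u²))^{λ/(2k)} = exp(λ t (φ̃_L(u) - 1)) holds, where φ̃_L(u) = ∫_0^1 β²e^{2ktv}/(β²e^{2ktv} + u²) dv. -/
open Real

/-! The integrand of `φ̃_L` is the logarithmic derivative of `v ↦ β² e^{2ktv} + u²` divided by
`2kt`, so `φ̃_L(u) = (log (β² e^{2kt} + u²) - log (β² + u²)) / (2kt)`. Multiplying by `λt` and
subtracting `λt = (λ / 2k) · 2kt` gives `λ / 2k` times the logarithm of the left-hand base. -/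

theorem hasDerivAt_log_mul_exp_add_div {a b c v : ℝ} (hc : c ≠ 0)
    (hv : a * exp (c * v) + b ≠ 0) :
    HasDerivAt (fun v => log (a * exp (c * v) + b) / c)
      (a * exp (c * v) / (a * exp (c * v) + b)) v := by
  have hinner : HasDerivAt (fun v => a * exp (c * v) + b) (a * (exp (c * v) * c)) v := by
    simpa using ((((hasDerivAt_id v).const_mul c).exp).const_mul a).add_const b
  refine ((hinner.log hv).div_const c).congr_deriv ?_
  field_simp

theorem integral_mul_exp_div_mul_exp_add {a b c : ℝ} (ha : 0 < a) (hb : 0 ≤ b) (hc : c ≠ 0)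
    (x y : ℝ) :
    ∫ v in x..y, a * exp (c * v) / (a * exp (c * v) + b)
      = (log (a * exp (c * y) + b) - log (a * exp (c * x) + b)) / c := by
  have hpos : ∀ v, 0 < a * exp (c * v) + b := fun v => by positivity
  rw [sub_div]
  refine intervalIntegral.integral_eq_sub_of_hasDerivAt
    (fun v _ => hasDerivAt_log_mul_exp_add_div hc (hpos v).ne') ?_
  refine Continuous.intervalIntegrable ?_ x y
  exact Continuous.div (by fun_prop) (by fun_prop) fun v => (hpos v).ne'

theorem log_add_mul_exp_neg_div {a b : ℝ} (ha : 0 < a) (hb : 0 ≤ b) (c : ℝ) :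
    log ((a + b * exp (-c)) / (a + b)) = log (a * exp c + b) - log (a + b) - c := by
  have hfactor : a + b * exp (-c) = exp (-c) * (a * exp c + b) := by
    rw [mul_add, ← mul_assoc, mul_comm (exp (-c)) a, mul_assoc, ← exp_add, neg_add_cancel,
      exp_zero, mul_one, mul_comm]
  rw [log_div (by positivity) (by positivity), hfactor, log_mul (exp_ne_zero _) (by positivity),
    log_exp]
  ring

theorem symmetric_bilateralGammaOU_compound_poisson_representation_general
    (k lam β : ℝ) (hk : 0 < k) (hβ : 0 < β)
    (t : ℝ) (ht : 0 < t) (u : ℝ) :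
    ((β ^ 2 + u ^ 2 * Real.exp (-2 * k * t)) / (β ^ 2 + u ^ 2)) ^ (lam / (2 * k))
      = Real.exp (lam * t *
          ((∫ v in (0:ℝ)..1,
              β ^ 2 * Real.exp (2 * k * t * v)
                / (β ^ 2 * Real.exp (2 * k * t * v) + u ^ 2)) - 1)) := by
  have hkt : 2 * k * t ≠ 0 := by positivity
  rw [integral_mul_exp_div_mul_exp_add (by positivity) (sq_nonneg u) hkt, mul_zero, mul_one,
    exp_zero, mul_one, rpow_def_of_pos (by positivity), neg_mul, neg_mul,
    log_add_mul_exp_neg_div (by positivity) (sq_nonneg u)]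
  field_simp

/-- Compound Poisson representation of the symmetric bilateral Gamma-OU law at time `t`:
`((β² + u²e^{-2kt})/(β² + u²))^{λ/(2k)} = exp(λ t (φ̃_L(u) - 1))` where
`φ̃_L(u) = ∫_0^1 β²e^{2ktv}/(β²e^{2ktv} + u²) dv`. -/
theorem symmetric_bilateralGammaOU_compound_poisson_representation
    (k lam β : ℝ) (hk : 0 < k) (hlam : 0 < lam) (hβ : 0 < β)
    (t : ℝ) (ht : 0 < t) (u : ℝ) :
    ((β ^ 2 + u ^ 2 * Real.exp (-2 * k * t)) / (β ^ 2 + u ^ 2)) ^ (lam / (2 * k))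
      = Real.exp (lam * t *
          ((∫ v in (0:ℝ)..1,
              β ^ 2 * Real.exp (2 * k * t * v)
                / (β ^ 2 * Real.exp (2 * k * t * v) + u ^ 2)) - 1)) :=
  symmetric_bilateralGammaOU_compound_poisson_representation_general k lam β hk hβ t ht u
end

section
/- Let E_u ~ Erlang(n, β₁) and E_d ~ Erlang(m, β₂) be independent. Then the density of E_u - E_d at x ≥ 0 equals (β₁ e^{-β₁ x}/(m-1)!) (β₂/(β₁+β₂))^m ∑_{j=0}^{n-1} ((n+m-j-2)!/(j!(n-j-1)!)) (β₁/(β₁+β₂))^{n-j-1} (β₁ x)^j, with the symmetric formula (swapping roles) for x < 0. -/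
/-- Density of the Erlang(n, β) law, vanishing on `(-∞, 0]`. -/
noncomputable def erlangPdf (n : ℕ) (β : ℝ) (x : ℝ) : ℝ :=
  if 0 < x then β * (β * x) ^ (n - 1) * Real.exp (-β * x) / (Nat.factorial (n - 1) : ℝ)
  else 0

/-!
For `x ≥ 0` only `y > 0` contributes, and there the integrand is a constant times
`(x + y)^(n-1) y^(m-1) e^{-(β₁+β₂) y}`. Expanding `(x + y)^(n-1)` binomially reduces it to Gamma
integrals `∫₀^∞ y^k e^{-c y} dy = k!/c^(k+1)`, which produce the stated sum. The case `x < 0`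
is the same computation with the roles of the two laws swapped, via the shift `y ↦ y - x`.
-/

open MeasureTheory Real Set Finset
open scoped Nat

lemma integrableOn_pow_mul_exp_neg_mul_Ioi (k : ℕ) {c : ℝ} (hc : 0 < c) :
    IntegrableOn (fun y : ℝ => y ^ k * exp (-(c * y))) (Ioi 0) :=
  (integrableOn_rpow_mul_exp_neg_mul_rpow (s := k) (p := 1)
      (neg_one_lt_zero.trans_le k.cast_nonneg) one_pos hc).congr_fun
    (fun y _ => by simp only [rpow_natCast, rpow_one, neg_mul]) measurableSet_Ioi

lemma integral_pow_mul_exp_neg_mul_Ioi (k : ℕ) {c : ℝ} (hc : 0 < c) :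
    ∫ y in Ioi 0, y ^ k * exp (-(c * y)) = k ! / c ^ (k + 1) := by
  have h := integral_rpow_mul_exp_neg_mul_Ioi (a := k + 1) (by positivity) hc
  simp only [add_sub_cancel_right, rpow_natCast, Gamma_nat_eq_factorial] at h
  rw [← Nat.cast_add_one, rpow_natCast] at h
  rw [h, div_pow, one_pow, one_div_mul_eq_div]

lemma integral_add_pow_mul_pow_mul_exp_neg_mul_Ioi (a b : ℕ) (x : ℝ) {c : ℝ} (hc : 0 < c) :
    ∫ y in Ioi 0, (x + y) ^ a * y ^ b * exp (-(c * y))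
      = ∑ j ∈ range (a + 1), a.choose j * x ^ j * ((a - j + b)! / c ^ (a - j + b + 1)) := by
  have hexpand : ∀ y : ℝ, (x + y) ^ a * y ^ b * exp (-(c * y))
      = ∑ j ∈ range (a + 1), a.choose j * x ^ j * (y ^ (a - j + b) * exp (-(c * y))) := by
    intro y
    rw [add_pow, sum_mul, sum_mul]
    refine sum_congr rfl fun j _ => ?_
    rw [pow_add]
    ring
  simp_rw [hexpand]
  rw [integral_finsetSum _ fun j _ => (integrableOn_pow_mul_exp_neg_mul_Ioi _ hc).const_mul _]
  simp_rw [integral_const_mul, integral_pow_mul_exp_neg_mul_Ioi _ hc]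

lemma erlangPdf_succ_of_pos (a : ℕ) (β : ℝ) {x : ℝ} (hx : 0 < x) :
    erlangPdf (a + 1) β x = β ^ (a + 1) / a ! * (x ^ a * exp (-(β * x))) := by
  rw [erlangPdf, if_pos hx, Nat.add_sub_cancel, mul_pow, neg_mul]
  ring

lemma integral_comp_add_mul_eq_integral_comp_neg_add_mul (f g : ℝ → ℝ) (x : ℝ) :
    ∫ y, f (x + y) * g y = ∫ y, g (-x + y) * f y := by
  rw [← integral_add_right_eq_self (fun y => g (-x + y) * f y) x]
  simp only [add_comm _ x, neg_add_cancel_left, mul_comm]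

lemma integral_erlangPdf_add_mul_erlangPdf_of_nonneg {n m : ℕ} (hn : 1 ≤ n) (hm : 1 ≤ m)
    {β₁ β₂ : ℝ} (hβ₁ : 0 < β₁) (hβ₂ : 0 < β₂) {x : ℝ} (hx : 0 ≤ x) :
    ∫ y, erlangPdf n β₁ (x + y) * erlangPdf m β₂ y
      = β₁ * exp (-β₁ * x) / (m - 1)! * (β₂ / (β₁ + β₂)) ^ m
          * ∑ j ∈ range n, ((n + m - j - 2)! : ℝ) / (j ! * (n - j - 1)!)
              * (β₁ / (β₁ + β₂)) ^ (n - j - 1) * (β₁ * x) ^ j := by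
  obtain ⟨a, rfl⟩ := Nat.exists_eq_add_of_le' hn
  obtain ⟨b, rfl⟩ := Nat.exists_eq_add_of_le' hm
  have hc : 0 < β₁ + β₂ := add_pos hβ₁ hβ₂
  let K := β₁ ^ (a + 1) / a ! * (β₂ ^ (b + 1) / b !) * exp (-β₁ * x)
  have hIoi : ∀ y ∈ Ioi (0 : ℝ), erlangPdf (a + 1) β₁ (x + y) * erlangPdf (b + 1) β₂ y
      = K * ((x + y) ^ a * y ^ b * exp (-((β₁ + β₂) * y))) := by
    intro y (hy : 0 < y)
    rw [erlangPdf_succ_of_pos _ _ (by linarith), erlangPdf_succ_of_pos _ _ hy]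
    have hexp : exp (-(β₁ * (x + y))) * exp (-(β₂ * y)) = exp (-β₁ * x) * exp (-((β₁ + β₂) * y)) := by
      rw [← exp_add, ← exp_add]; ring_nf
    linear_combination (β₁ ^ (a + 1) / a ! * (β₂ ^ (b + 1) / b !) * (x + y) ^ a * y ^ b) * hexp
  have hcompl : ∀ y ∉ Ioi (0 : ℝ), erlangPdf (a + 1) β₁ (x + y) * erlangPdf (b + 1) β₂ y = 0 :=
    fun y hy => by rw [show erlangPdf (b + 1) β₂ y = 0 from if_neg hy, mul_zero]
  rw [← setIntegral_eq_integral_of_forall_compl_eq_zero hcompl,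
    setIntegral_congr_fun measurableSet_Ioi hIoi, integral_const_mul,
    integral_add_pow_mul_pow_mul_exp_neg_mul_Ioi _ _ _ hc, mul_sum, mul_sum]
  refine sum_congr rfl fun j hj => ?_
  obtain ⟨k, rfl⟩ := Nat.exists_eq_add_of_le (Nat.lt_succ_iff.mp (mem_range.mp hj))
  rw [show j + k + 1 + (b + 1) - j - 2 = k + b by omega, show j + k + 1 - j - 1 = k by omega,
    Nat.add_sub_cancel, Nat.add_sub_cancel_left, Nat.cast_choose ℝ (Nat.le_add_right j k),
    Nat.add_sub_cancel_left, div_pow, div_pow]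
  simp only [K]
  field_simp
  ring

/-- Density of the difference `E_u - E_d` of independent `E_u ~ Erlang(n, β₁)` and
`E_d ~ Erlang(m, β₂)`, computed as the convolution `∫ f_{E_u}(x+y) f_{E_d}(y) dy`:
for `x ≥ 0` it equals
`(β₁ e^{-β₁x}/(m-1)!) (β₂/(β₁+β₂))^m ∑_{j=0}^{n-1} ((n+m-j-2)!/(j!(n-j-1)!))
(β₁/(β₁+β₂))^{n-j-1} (β₁x)^j`, with the symmetric formula for `x < 0`. -/
theorem erlang_difference_density
    (n m : ℕ) (hn : 1 ≤ n) (hm : 1 ≤ m) (β₁ β₂ : ℝ) (hβ₁ : 0 < β₁) (hβ₂ : 0 < β₂) :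
    (∀ x : ℝ, 0 ≤ x →
      (∫ y : ℝ, erlangPdf n β₁ (x + y) * erlangPdf m β₂ y)
        = β₁ * Real.exp (-β₁ * x) / (Nat.factorial (m - 1) : ℝ)
            * (β₂ / (β₁ + β₂)) ^ m
            * ∑ j ∈ Finset.range n,
                (Nat.factorial (n + m - j - 2) : ℝ)
                  / ((Nat.factorial j : ℝ) * (Nat.factorial (n - j - 1) : ℝ))
                  * (β₁ / (β₁ + β₂)) ^ (n - j - 1) * (β₁ * x) ^ j) ∧
    (∀ x : ℝ, x < 0 →
      (∫ y : ℝ, erlangPdf n β₁ (x + y) * erlangPdf m β₂ y)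
        = β₂ * Real.exp (β₂ * x) / (Nat.factorial (n - 1) : ℝ)
            * (β₁ / (β₁ + β₂)) ^ n
            * ∑ i ∈ Finset.range m,
                (Nat.factorial (n + m - i - 2) : ℝ)
                  / ((Nat.factorial i : ℝ) * (Nat.factorial (m - i - 1) : ℝ))
                  * (β₂ / (β₁ + β₂)) ^ (m - i - 1) * (-(β₂ * x)) ^ i) := by
  refine ⟨fun x hx => integral_erlangPdf_add_mul_erlangPdf_of_nonneg hn hm hβ₁ hβ₂ hx,
    fun x hx => ?_⟩
  rw [integral_comp_add_mul_eq_integral_comp_neg_add_mul,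
    integral_erlangPdf_add_mul_erlangPdf_of_nonneg hm hn hβ₂ hβ₁ (neg_nonneg.mpr hx.le),
    neg_mul_neg, add_comm β₂ β₁, mul_neg]
  simp_rw [add_comm m n]
end
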